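/- Let E be a finite set with |E| = D ≥ 2, partitioned into blocks (A_ℓ)_{ℓ∈L} with |A_ℓ| = d_ℓ, and let 1 ≤ k ≤ D − 1. Define τ(k) := Σ_ℓ (d_ℓ/D)·min(k(d_ℓ−1)/(D−1), 1). Let (x_0, x_1, …, x_k) be a uniformly random tuple of k+1 pairwise distinct elements of E. Then the probability that the block containing x_0 contains none of x_1, …, x_k is at most e^{−τ(k)/2}. -/

import Mathlib

open Classical Finset

lemma countInj {α : Type*} [Fintype α] [DecidableEq α] (n : ℕ) (F : Finset α) :
    (Finset.univ.filter (fun x : Fin n → α => Function.Injective x ∧ ∀ i, x i ∈ F)).card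
      = F.card.descFactorial n := by
  rw [← Fintype.card_subtype]
  have e : {x : Fin n → α // Function.Injective x ∧ ∀ i, x i ∈ F} ≃ (Fin n ↪ F) :=
    { toFun := fun x => ⟨fun i => ⟨x.1 i, x.2.2 i⟩, fun i j h => x.2.1 (congrArg Subtype.val h)⟩
      invFun := fun f => ⟨fun i => f i, fun i j h => f.injective (Subtype.ext h), fun i => (f i).2⟩
      left_inv := fun x => rfl
      right_inv := fun f => rfl }
  rw [Fintype.card_congr e, Fintype.card_embedding_eq, Fintype.card_fin, Fintype.card_coe]

lemma descFact_le {a b : ℕ} (hab : a ≤ b) (k : ℕ) :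
    b ^ k * a.descFactorial k ≤ a ^ k * b.descFactorial k := by
  induction k with
  | zero => simp
  | succ k ih =>
    rw [Nat.descFactorial_succ, Nat.descFactorial_succ, pow_succ, pow_succ]
    have key : b * (a - k) ≤ a * (b - k) := by
      rcases le_or_gt a k with h | h
      · simp [Nat.sub_eq_zero_of_le h]
      · have hkb : k ≤ b := le_of_lt (lt_of_lt_of_le h hab)
        zify [le_of_lt h, hkb]
        nlinarith
    calc b ^ k * b * ((a - k) * a.descFactorial k)
        = (b * (a - k)) * (b ^ k * a.descFactorial k) := by ring
      _ ≤ (a * (b - k)) * (a ^ k * b.descFactorial k) := Nat.mul_le_mul key ih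
      _ = a ^ k * a * ((b - k) * b.descFactorial k) := by ring

lemma exp_neg_le {x : ℝ} (h0 : 0 ≤ x) (h1 : x ≤ 1) : Real.exp (-x) ≤ 1 - x / 2 := by
  have hc := convexOn_exp.2 (Set.mem_univ (-1 : ℝ)) (Set.mem_univ (0 : ℝ))
    h0 (by linarith : (0:ℝ) ≤ 1 - x) (by ring)
  simp only [smul_eq_mul, mul_neg, mul_one, mul_zero, add_zero, Real.exp_zero] at hc
  have he : Real.exp (-1) ≤ 1 / 2 := by
    have h2 : (2:ℝ) ≤ Real.exp 1 := by
      have := Real.add_one_le_exp (1:ℝ); linarith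
    have hprod : Real.exp (-1) * Real.exp 1 = 1 := by
      rw [← Real.exp_add]; norm_num
    nlinarith [Real.exp_pos (-1 : ℝ)]
  nlinarith [Real.exp_pos (-1 : ℝ)]

/-- For `E` of size `D ≥ 2` partitioned into blocks `(A_ℓ)_{ℓ∈L}` of sizes `d_ℓ`, with
`τ(k) := Σ_ℓ (d_ℓ/D)·min(k(d_ℓ−1)/(D−1), 1)` and a uniformly random tuple
`(x_0, …, x_k)` of `k+1` pairwise distinct elements of `E` (`1 ≤ k ≤ D − 1`), the
probability that the block containing `x_0` contains none of `x_1, …, x_k` is at most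
`e^{−τ(k)/2}`. -/
theorem stmt17 {α ι : Type*} [Fintype α] [DecidableEq α]
    (E : Finset α) (L : Finset ι) (A : ι → Finset α) (d : ι → ℕ) (D k : ℕ)
    (hE : E.card = D) (hD : 2 ≤ D) (hk1 : 1 ≤ k) (hk : k ≤ D - 1)
    (hdisj : (L : Set ι).Pairwise (fun ℓ ℓ' => Disjoint (A ℓ) (A ℓ')))
    (hcover : L.biUnion A = E)
    (hcard : ∀ ℓ ∈ L, (A ℓ).card = d ℓ) :
    ((Finset.univ.filter (fun x : Fin (k + 1) → α =>
        (Function.Injective x ∧ ∀ i, x i ∈ E) ∧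
        ∀ ℓ ∈ L, x 0 ∈ A ℓ → ∀ i : Fin k, x i.succ ∉ A ℓ)).card : ℝ)
      / ((Finset.univ.filter (fun x : Fin (k + 1) → α =>
          Function.Injective x ∧ ∀ i, x i ∈ E)).card : ℝ)
    ≤ Real.exp (-(∑ ℓ ∈ L, ((d ℓ : ℝ) / D) *
        min ((k : ℝ) * ((d ℓ : ℝ) - 1) / ((D : ℝ) - 1)) 1) / 2) := by
  -- basic facts
  have hsub : ∀ ℓ ∈ L, A ℓ ⊆ E := fun ℓ hℓ => hcover ▸ Finset.subset_biUnion_of_mem A hℓ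
  have hdle : ∀ ℓ ∈ L, d ℓ ≤ D := fun ℓ hℓ => by
    rw [← hcard ℓ hℓ, ← hE]; exact Finset.card_le_card (hsub ℓ hℓ)
  have hsum : ∑ ℓ ∈ L, d ℓ = D := by
    rw [← hE, ← hcover, Finset.card_biUnion (fun x hx y hy hxy => hdisj hx hy hxy)]
    exact Finset.sum_congr rfl (fun ℓ hℓ => (hcard ℓ hℓ).symm)
  have huniq : ∀ {ℓ ℓ' : ι}, ℓ ∈ L → ℓ' ∈ L → ∀ {a : α}, a ∈ A ℓ → a ∈ A ℓ' → ℓ = ℓ' := by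
    intro ℓ ℓ' hℓ hℓ' a ha ha'
    by_contra hne
    exact Finset.disjoint_left.mp (hdisj hℓ hℓ' hne) ha ha'
  have hEpos : 0 < E.card := by rw [hE]; omega
  have hD1 : D.descFactorial (k+1) = D * (D-1).descFactorial k := by
    obtain ⟨D', rfl⟩ : ∃ D', D = D' + 1 := ⟨D - 1, by omega⟩
    rw [Nat.add_sub_cancel, Nat.succ_descFactorial_succ]
  have hcpos : 0 < (D-1).descFactorial k := by
    rcases Nat.eq_zero_or_pos ((D-1).descFactorial k) with hz | hp
    · have := Nat.descFactorial_eq_zero_iff_lt.mp hz; omega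
    · exact hp
  have hone : 1 ≤ D := by omega
  -- denominator count
  have hDen : (Finset.univ.filter (fun x : Fin (k + 1) → α =>
          Function.Injective x ∧ ∀ i, x i ∈ E)).card = D.descFactorial (k+1) := by
    rw [countInj, hE]
  -- numerator count
  have hEne : E.Nonempty := Finset.card_pos.mp hEpos
  have hLne : L.Nonempty := by
    obtain ⟨a, ha⟩ := hEne
    rw [← hcover] at ha
    obtain ⟨ℓ, hℓ, _⟩ := Finset.mem_biUnion.mp ha
    exact ⟨ℓ, hℓ⟩
  obtain ⟨ℓ₀, hℓ₀⟩ := hLne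
  set f : (Fin (k+1) → α) → ι :=
    fun x => if h : ∃ ℓ, ℓ ∈ L ∧ x 0 ∈ A ℓ then h.choose else ℓ₀ with hf
  have hfspec : ∀ (x : Fin (k+1) → α) (ℓ : ι), ℓ ∈ L → x 0 ∈ A ℓ → f x = ℓ := by
    intro x ℓ hℓ hx
    have h : ∃ ℓ', ℓ' ∈ L ∧ x 0 ∈ A ℓ' := ⟨ℓ, hℓ, hx⟩
    rw [hf]
    simp only [dif_pos h]
    exact huniq h.choose_spec.1 hℓ h.choose_spec.2 hx
  clear hf
  have hNum : (Finset.univ.filter (fun x : Fin (k + 1) → α =>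
        (Function.Injective x ∧ ∀ i, x i ∈ E) ∧
        ∀ ℓ ∈ L, x 0 ∈ A ℓ → ∀ i : Fin k, x i.succ ∉ A ℓ)).card
      = ∑ ℓ ∈ L, d ℓ * (D - d ℓ).descFactorial k := by
    rw [Finset.card_eq_sum_card_fiberwise (f := f) (t := L) ?hmem]
    case hmem =>
      intro x hx
      obtain ⟨-, ⟨-, hin⟩, -⟩ := Finset.mem_filter.mp hx
      have : x 0 ∈ L.biUnion A := hcover.symm ▸ hin 0
      obtain ⟨ℓ, hℓ, hmem⟩ := Finset.mem_biUnion.mp this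
      rw [hfspec x ℓ hℓ hmem]; exact hℓ
    refine Finset.sum_congr rfl (fun ℓ hℓ => ?_)
    -- fiber = explicit set
    have hfib : ((Finset.univ.filter (fun x : Fin (k + 1) → α =>
        (Function.Injective x ∧ ∀ i, x i ∈ E) ∧
        ∀ ℓ ∈ L, x 0 ∈ A ℓ → ∀ i : Fin k, x i.succ ∉ A ℓ)).filter (fun x => f x = ℓ))
        = Finset.univ.filter (fun x : Fin (k + 1) → α =>
            (x 0 ∈ A ℓ ∧ ∀ i : Fin k, x i.succ ∉ A ℓ) ∧
            Function.Injective x ∧ ∀ i, x i ∈ E) := by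
      ext x
      simp only [Finset.mem_filter, Finset.mem_univ, true_and]
      constructor
      · rintro ⟨⟨⟨hinj, hin⟩, hav⟩, hfx⟩
        have : x 0 ∈ L.biUnion A := hcover.symm ▸ hin 0
        obtain ⟨ℓ', hℓ', hmem⟩ := Finset.mem_biUnion.mp this
        have heq : ℓ' = ℓ := by rw [← hfspec x ℓ' hℓ' hmem, hfx]
        subst heq
        exact ⟨⟨hmem, hav ℓ' hℓ' hmem⟩, hinj, hin⟩
      · rintro ⟨⟨hx0, havℓ⟩, hinj, hin⟩
        refine ⟨⟨⟨hinj, hin⟩, ?_⟩, hfspec x ℓ hℓ hx0⟩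
        intro ℓ' hℓ' hx0'
        have : ℓ' = ℓ := huniq hℓ' hℓ hx0' hx0
        subst this
        exact havℓ
    rw [hfib]
    -- bijection with product
    have hbij : (Finset.univ.filter (fun x : Fin (k + 1) → α =>
            (x 0 ∈ A ℓ ∧ ∀ i : Fin k, x i.succ ∉ A ℓ) ∧
            Function.Injective x ∧ ∀ i, x i ∈ E)).card
        = ((A ℓ) ×ˢ (Finset.univ.filter (fun y : Fin k → α =>
            Function.Injective y ∧ ∀ i, y i ∈ E \ A ℓ))).card := by
      refine Finset.card_nbij' (fun x => (x 0, fun i => x i.succ))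
        (fun p => Fin.cases p.1 p.2) ?_ ?_ ?_ ?_
      · intro x hx
        obtain ⟨-, ⟨hx0, hav⟩, hinj, hin⟩ := Finset.mem_filter.mp hx
        refine Finset.mem_product.mpr ⟨hx0, Finset.mem_filter.mpr ⟨Finset.mem_univ _,
          fun i j h => Fin.succ_injective _ (hinj h),
          fun i => Finset.mem_sdiff.mpr ⟨hin _, hav i⟩⟩⟩
      · rintro ⟨a, y⟩ hp
        obtain ⟨ha, hy⟩ := Finset.mem_product.mp hp
        obtain ⟨-, hyinj, hyin⟩ := Finset.mem_filter.mp hy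
        refine Finset.mem_filter.mpr ⟨Finset.mem_univ _, ⟨by simpa using ha, fun i => by
          simpa using (Finset.mem_sdiff.mp (hyin i)).2⟩, ?_, fun i => ?_⟩
        · intro i j hij
          induction i using Fin.cases with
          | zero =>
            induction j using Fin.cases with
            | zero => rfl
            | succ j =>
              simp only [Fin.cases_zero, Fin.cases_succ] at hij
              exact absurd (hij ▸ ha) (Finset.mem_sdiff.mp (hyin j)).2
          | succ i =>
            induction j using Fin.cases with
            | zero =>
              simp only [Fin.cases_zero, Fin.cases_succ] at hij
              exact absurd (hij ▸ (Finset.mem_sdiff.mp (hyin i)).1)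
                (fun _ => (Finset.mem_sdiff.mp (hyin i)).2 (hij ▸ ha))
            | succ j =>
              simp only [Fin.cases_succ] at hij
              rw [hyinj hij]
        · induction i using Fin.cases with
          | zero => simpa using hsub ℓ hℓ ha
          | succ i => simpa using (Finset.mem_sdiff.mp (hyin i)).1
      · intro x hx
        funext i
        induction i using Fin.cases with
        | zero => simp
        | succ i => simp
      · rintro ⟨a, y⟩ hp
        simp
    rw [hbij, Finset.card_product, countInj, hcard ℓ hℓ,
      Finset.card_sdiff_of_subset (hsub ℓ hℓ), hE, hcard ℓ hℓ]
  -- now the analytic part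
  rw [hNum, hDen]
  have hc : (0:ℝ) < ((D-1).descFactorial k : ℝ) := by exact_mod_cast hcpos
  have hDpos : (0:ℝ) < (D:ℝ) := by
    have : (2:ℝ) ≤ (D:ℝ) := by exact_mod_cast hD
    linarith
  have hD1R : (0:ℝ) < (D:ℝ) - 1 := by
    have : (2:ℝ) ≤ (D:ℝ) := by exact_mod_cast hD
    linarith
  have hD1cast : ((D - 1 : ℕ) : ℝ) = (D:ℝ) - 1 := by
    rw [Nat.cast_sub hone, Nat.cast_one]
  rw [hD1]
  push_cast
  rw [Finset.sum_div]
  have hterm : ∀ ℓ ∈ L, (d ℓ : ℝ) * ((D - d ℓ).descFactorial k : ℝ)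
      / ((D:ℝ) * ((D-1).descFactorial k : ℝ))
      ≤ ((d ℓ : ℝ) / D) * (1 - min ((k : ℝ) * ((d ℓ : ℝ) - 1) / ((D : ℝ) - 1)) 1 / 2) := by
    intro ℓ hℓ
    rcases Nat.eq_zero_or_pos (d ℓ) with h0 | hd1
    · simp [h0]
    · have hdD : d ℓ ≤ D := hdle ℓ hℓ
      set t : ℝ := ((d ℓ:ℝ) - 1)/((D:ℝ) - 1) with ht
      have hd1R : (1:ℝ) ≤ (d ℓ : ℝ) := by exact_mod_cast hd1
      have hdDR : (d ℓ : ℝ) ≤ (D:ℝ) := by exact_mod_cast hdD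
      have ht0 : 0 ≤ t := div_nonneg (by linarith) hD1R.le
      have ht1 : t ≤ 1 := by rw [ht, div_le_one hD1R]; linarith
      set m : ℝ := min ((k : ℝ) * ((d ℓ : ℝ) - 1) / ((D : ℝ) - 1)) 1 with hm
      have hkt : (k : ℝ) * ((d ℓ : ℝ) - 1) / ((D : ℝ) - 1) = (k:ℝ) * t := by
        rw [ht, mul_div_assoc]
      have hm0 : 0 ≤ m := le_min (by rw [hkt]; positivity) zero_le_one
      have hm1 : m ≤ 1 := min_le_right _ _
      have hmkt : m ≤ (k:ℝ) * t := hkt ▸ min_le_left _ _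
      -- step 1: descFactorial ratio bound
      have hkey := descFact_le (Nat.sub_le_sub_left hd1 D) k
      have hkeyR : ((D-1:ℕ):ℝ) ^ k * ((D - d ℓ).descFactorial k : ℝ)
          ≤ ((D - d ℓ:ℕ):ℝ) ^ k * ((D-1:ℕ).descFactorial k : ℝ) := by exact_mod_cast hkey
      have hDdcast : ((D - d ℓ : ℕ) : ℝ) = (D:ℝ) - (d ℓ:ℝ) := Nat.cast_sub hdD
      have h1t : (1 - t) = ((D:ℝ) - (d ℓ:ℝ))/((D:ℝ) - 1) := by
        rw [ht]; field_simp; ring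
      have step1 : ((D - d ℓ).descFactorial k : ℝ) / ((D-1).descFactorial k : ℝ)
          ≤ (1 - t) ^ k := by
        rw [div_le_iff₀ hc, h1t, div_pow, div_mul_eq_mul_div, le_div_iff₀ (pow_pos hD1R k)]
        calc ((D - d ℓ).descFactorial k : ℝ) * ((D:ℝ) - 1) ^ k
            = ((D-1:ℕ):ℝ) ^ k * ((D - d ℓ).descFactorial k : ℝ) := by rw [hD1cast]; ring
          _ ≤ ((D - d ℓ:ℕ):ℝ) ^ k * ((D-1:ℕ).descFactorial k : ℝ) := hkeyR
          _ = ((D:ℝ) - (d ℓ:ℝ)) ^ k * ((D-1).descFactorial k : ℝ) := by rw [hDdcast]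
      -- step 2
      have step2 : (1 - t) ^ k ≤ Real.exp (-m) := by
        calc (1 - t) ^ k ≤ Real.exp (-t) ^ k := by
              refine pow_le_pow_left₀ (by linarith) ?_ k
              have := Real.add_one_le_exp (-t); linarith
          _ = Real.exp ((k:ℝ) * (-t)) := (Real.exp_nat_mul _ k).symm
          _ ≤ Real.exp (-m) := Real.exp_le_exp.mpr (by rw [mul_neg]; linarith)
      have step3 : Real.exp (-m) ≤ 1 - m / 2 := exp_neg_le hm0 hm1
      have hrw : (d ℓ : ℝ) * ((D - d ℓ).descFactorial k : ℝ)
          / ((D:ℝ) * ((D-1).descFactorial k : ℝ))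
          = ((d ℓ : ℝ) / D) * (((D - d ℓ).descFactorial k : ℝ) / ((D-1).descFactorial k : ℝ)) :=
        mul_div_mul_comm _ _ _ _
      rw [hrw]
      refine mul_le_mul_of_nonneg_left ?_ (by positivity)
      linarith
  calc ∑ ℓ ∈ L, (d ℓ : ℝ) * ((D - d ℓ).descFactorial k : ℝ)
        / ((D:ℝ) * ((D-1).descFactorial k : ℝ))
      ≤ ∑ ℓ ∈ L, ((d ℓ : ℝ) / D) *
          (1 - min ((k : ℝ) * ((d ℓ : ℝ) - 1) / ((D : ℝ) - 1)) 1 / 2) :=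
        Finset.sum_le_sum hterm
    _ = (∑ ℓ ∈ L, (d ℓ : ℝ) / D) - (∑ ℓ ∈ L, ((d ℓ : ℝ) / D) *
          min ((k : ℝ) * ((d ℓ : ℝ) - 1) / ((D : ℝ) - 1)) 1) / 2 := by
        rw [Finset.sum_div, ← Finset.sum_sub_distrib]
        exact Finset.sum_congr rfl (fun ℓ _ => by ring)
    _ = 1 - (∑ ℓ ∈ L, ((d ℓ : ℝ) / D) *
          min ((k : ℝ) * ((d ℓ : ℝ) - 1) / ((D : ℝ) - 1)) 1) / 2 := by
        rw [← Finset.sum_div]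
        have hs : ∑ ℓ ∈ L, (d ℓ : ℝ) = (D:ℝ) := by exact_mod_cast hsum
        rw [hs, div_self (ne_of_gt hDpos)]
    _ ≤ Real.exp (-(∑ ℓ ∈ L, ((d ℓ : ℝ) / D) *
          min ((k : ℝ) * ((d ℓ : ℝ) - 1) / ((D : ℝ) - 1)) 1) / 2) := by
        have := Real.add_one_le_exp (-(∑ ℓ ∈ L, ((d ℓ : ℝ) / D) *
          min ((k : ℝ) * ((d ℓ : ℝ) - 1) / ((D : ℝ) - 1)) 1) / 2)
        linarith
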